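/- (Concatenation lemma, contrapositive form) Let h : ℕ → ℕ, let σ be a string, let T be a finite tree that is h-bushy above σ, and let B be a set of strings that is h-small above σ. Then T has a leaf τ (necessarily extending σ) such that B is h-small above τ. -/

import Mathlib

/-- A tree is a set of strings (finite sequences of naturals) closed under prefixes. -/
def IsTree (T : Set (List ℕ)) : Prop :=
  ∀ σ ∈ T, ∀ τ : List ℕ, τ <+: σ → τ ∈ T

/-- A leaf of `T` is an element of `T` with no immediate extension in `T`. -/
def IsLeaf (T : Set (List ℕ)) (τ : List ℕ) : Prop :=
  τ ∈ T ∧ ∀ a : ℕ, τ ++ [a] ∉ T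

/-- A tree `T` is `h`-bushy above `σ`: `σ ∈ T`, every element of `T` is comparable
with `σ`, and every non-leaf `τ ∈ T` extending `σ` has at least `h |τ|` immediate
extensions in `T`. -/
def BushyAbove (h : ℕ → ℕ) (σ : List ℕ) (T : Set (List ℕ)) : Prop :=
  IsTree T ∧ σ ∈ T ∧
  (∀ τ ∈ T, τ <+: σ ∨ σ <+: τ) ∧
  (∀ τ ∈ T, σ <+: τ → ¬ IsLeaf T τ → (h τ.length : ℕ∞) ≤ {a : ℕ | τ ++ [a] ∈ T}.encard)

/-- `B` is `h`-big above `σ` if there is a finite tree, `h`-bushy above `σ`,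
all of whose leaves belong to `B`. -/
def BigAbove (h : ℕ → ℕ) (σ : List ℕ) (B : Set (List ℕ)) : Prop :=
  ∃ T : Set (List ℕ), T.Finite ∧ BushyAbove h σ T ∧ ∀ τ, IsLeaf T τ → τ ∈ B

/-- `B` is `h`-small above `σ` if it is not `h`-big above `σ`. -/
def SmallAbove (h : ℕ → ℕ) (σ : List ℕ) (B : Set (List ℕ)) : Prop :=
  ¬ BigAbove h σ B

/-!
Suppose instead that `B` is `h`-big above every leaf `τ` of `T`, witnessed by a finite
`h`-bushy tree `S τ` above `τ` with leaves in `B`. Grafting each `S τ` onto `T` at its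
leaf `τ` gives a finite tree that is `h`-bushy above `σ`: a node that is not a leaf of `T`
keeps its branching from `T`, and a node at or above a leaf `τ` gets its branching from
`S τ`, because distinct leaves of `T` are incomparable. The leaves of the grafted tree
are leaves of the `S τ`, hence lie in `B`, so `B` is `h`-big above `σ`.
-/

theorem List.IsPrefix.exists_append_singleton_prefix {α : Type*} {l₁ l₂ : List α}
    (h : l₁ <+: l₂) (hne : l₁ ≠ l₂) : ∃ a, l₁ ++ [a] <+: l₂ := by
  obtain ⟨t, rfl⟩ := h
  cases t with
  | nil => simp at hne
  | cons a t => exact ⟨a, t, by simp⟩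

theorem IsTree.eq_of_isLeaf_of_prefix {T : Set (List ℕ)} (hT : IsTree T) {τ ρ : List ℕ}
    (hτ : IsLeaf T τ) (hρ : ρ ∈ T) (hτρ : τ <+: ρ) : τ = ρ := by
  by_contra hne
  obtain ⟨a, ha⟩ := hτρ.exists_append_singleton_prefix hne
  exact hτ.2 a (hT ρ hρ _ ha)

theorem BushyAbove.prefix_of_isLeaf {h : ℕ → ℕ} {σ τ : List ℕ} {T : Set (List ℕ)}
    (hT : BushyAbove h σ T) (hτ : IsLeaf T τ) : σ <+: τ := by
  obtain ⟨hTree, hσ, hcomp, -⟩ := hT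
  rcases hcomp τ hτ.1 with hτσ | hστ
  · rw [hTree.eq_of_isLeaf_of_prefix hτ hσ hτσ]
  · exact hστ

def graft (T : Set (List ℕ)) (S : List ℕ → Set (List ℕ)) : Set (List ℕ) :=
  T ∪ ⋃ τ ∈ {τ | IsLeaf T τ}, S τ

section graft

variable {h : ℕ → ℕ} {T : Set (List ℕ)} {S : List ℕ → Set (List ℕ)} {τ ρ : List ℕ}

theorem mem_graft : ρ ∈ graft T S ↔ ρ ∈ T ∨ ∃ τ, IsLeaf T τ ∧ ρ ∈ S τ := by
  simp [graft]

theorem subset_graft : T ⊆ graft T S :=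
  Set.subset_union_left

theorem subset_graft_of_isLeaf (hτ : IsLeaf T τ) : S τ ⊆ graft T S :=
  fun _ hρ => mem_graft.2 (Or.inr ⟨τ, hτ, hρ⟩)

theorem finite_graft (hT : T.Finite) (hS : ∀ τ, IsLeaf T τ → (S τ).Finite) :
    (graft T S).Finite :=
  hT.union (Set.Finite.biUnion (hT.subset fun _ hτ => hτ.1) hS)

theorem isTree_graft (hT : IsTree T) (hS : ∀ τ, IsLeaf T τ → IsTree (S τ)) :
    IsTree (graft T S) := by
  intro ρ hρ π hπρ
  rcases mem_graft.1 hρ with hρT | ⟨τ, hτ, hρS⟩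
  · exact subset_graft (hT ρ hρT π hπρ)
  · exact subset_graft_of_isLeaf hτ (hS τ hτ ρ hρS π hπρ)

variable (hT : IsTree T) (hS : ∀ τ, IsLeaf T τ → BushyAbove h τ (S τ))
include hT hS

theorem mem_graft_cases (hρ : ρ ∈ graft T S) :
    (ρ ∈ T ∧ ¬ IsLeaf T ρ) ∨ ∃ τ, IsLeaf T τ ∧ τ <+: ρ ∧ ρ ∈ S τ := by
  have of_mem_T : ρ ∈ T → (ρ ∈ T ∧ ¬ IsLeaf T ρ) ∨ ∃ τ, IsLeaf T τ ∧ τ <+: ρ ∧ ρ ∈ S τ :=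
    fun hρT => (em (IsLeaf T ρ)).elim
      (fun hleaf => Or.inr ⟨ρ, hleaf, List.prefix_refl ρ, (hS ρ hleaf).2.1⟩)
      (fun hleaf => Or.inl ⟨hρT, hleaf⟩)
  rcases mem_graft.1 hρ with hρT | ⟨τ, hτ, hρS⟩
  · exact of_mem_T hρT
  · rcases (hS τ hτ).2.2.1 ρ hρS with hρτ | hτρ
    · exact of_mem_T (hT τ hτ.1 ρ hρτ)
    · exact Or.inr ⟨τ, hτ, hτρ, hρS⟩

/-- Holds because distinct leaves of `T` are incomparable. -/
theorem isLeaf_graft (hτ : IsLeaf T τ) (hτρ : τ <+: ρ) (hρ : IsLeaf (S τ) ρ) :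
    IsLeaf (graft T S) ρ := by
  refine ⟨subset_graft_of_isLeaf hτ hρ.1, fun a ha => ?_⟩
  have hτρa : τ <+: ρ ++ [a] := hτρ.trans (List.prefix_append ρ [a])
  rcases mem_graft.1 ha with haT | ⟨τ', hτ', haS⟩
  · have hlen := congrArg List.length (hT.eq_of_isLeaf_of_prefix hτ haT hτρa)
    have := hτρ.length_le
    simp only [List.length_append, List.length_singleton] at hlen
    omega
  · have hττ' : τ <+: τ' ∨ τ' <+: τ := by
      rcases (hS τ' hτ').2.2.1 _ haS with hle | hle
      · exact Or.inl (hτρa.trans hle)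
      · exact List.prefix_or_prefix_of_prefix hτρa hle
    have heq : τ = τ' := by
      rcases hττ' with hle | hle
      · exact hT.eq_of_isLeaf_of_prefix hτ hτ'.1 hle
      · exact (hT.eq_of_isLeaf_of_prefix hτ' hτ.1 hle).symm
    subst heq
    exact hρ.2 a haS

end graft

theorem bushyAbove_graft {h : ℕ → ℕ} {σ : List ℕ} {T : Set (List ℕ)}
    {S : List ℕ → Set (List ℕ)} (hT : BushyAbove h σ T)
    (hS : ∀ τ, IsLeaf T τ → BushyAbove h τ (S τ)) : BushyAbove h σ (graft T S) := by
  have ⟨hTree, hσ, hcomp, hbushy⟩ := hT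
  refine ⟨isTree_graft hTree fun τ hτ => (hS τ hτ).1, subset_graft hσ, ?_, ?_⟩
  · intro ρ hρ
    rcases mem_graft.1 hρ with hρT | ⟨τ, hτ, hρS⟩
    · exact hcomp ρ hρT
    · have hστ := hT.prefix_of_isLeaf hτ
      rcases (hS τ hτ).2.2.1 ρ hρS with hρτ | hτρ
      · exact List.prefix_or_prefix_of_prefix hρτ hστ
      · exact Or.inr (hστ.trans hτρ)
  · intro ρ hρ hσρ hρleaf
    rcases mem_graft_cases hTree hS hρ with ⟨hρT, hρleafT⟩ | ⟨τ, hτ, hτρ, hρS⟩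
    · exact (hbushy ρ hρT hσρ hρleafT).trans (Set.encard_mono fun _ ha => subset_graft ha)
    · have hρleafS : ¬ IsLeaf (S τ) ρ := fun hl => hρleaf (isLeaf_graft hTree hS hτ hτρ hl)
      exact ((hS τ hτ).2.2.2 ρ hρS hτρ hρleafS).trans
        (Set.encard_mono fun _ ha => subset_graft_of_isLeaf hτ ha)

theorem BigAbove.of_forall_isLeaf {h : ℕ → ℕ} {σ : List ℕ} {T B : Set (List ℕ)}
    (hTfin : T.Finite) (hT : BushyAbove h σ T) (hB : ∀ τ, IsLeaf T τ → BigAbove h τ B) :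
    BigAbove h σ B := by
  choose! S hSfin hS hSB using hB
  refine ⟨graft T S, finite_graft hTfin hSfin, bushyAbove_graft hT hS, fun ρ hρ => ?_⟩
  rcases mem_graft_cases hT.1 hS hρ.1 with ⟨hρT, hρleafT⟩ | ⟨τ, hτ, -, hρS⟩
  · obtain ⟨a, ha⟩ : ∃ a, ρ ++ [a] ∈ T := by simpa [IsLeaf, hρT] using hρleafT
    exact absurd (subset_graft ha) (hρ.2 a)
  · exact hSB τ hτ ρ ⟨hρS, fun a ha => hρ.2 a (subset_graft_of_isLeaf hτ ha)⟩

/-- Concatenation lemma, contrapositive form: a finite `h`-bushy tree above `σ`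
has a leaf `τ` (extending `σ`) above which a given `h`-small set stays `h`-small. -/
theorem concatenation_contrapositive (h : ℕ → ℕ) (σ : List ℕ) (T : Set (List ℕ))
    (hTfin : T.Finite) (hT : BushyAbove h σ T) (B : Set (List ℕ))
    (hB : SmallAbove h σ B) :
    ∃ τ : List ℕ, IsLeaf T τ ∧ σ <+: τ ∧ SmallAbove h τ B := by
  by_contra hcon
  push Not at hcon
  refine hB (BigAbove.of_forall_isLeaf hTfin hT fun τ hτ => ?_)
  simpa [SmallAbove] using hcon τ hτ (hT.prefix_of_isLeaf hτ)
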